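/- The set of atomic alignment instructions generated from a commitment is finite and bounded: if the commitment specification c(x, y, Cre, Det, Dis) has total syntactic size N (counting all constructors in Cre, Det, Dis, including nested lifecycle events expanded via R8–R12 to bounded depth d), then the rewrite closure under R4–R13 contains at most 5·2^d·N atomic instructions, and in particular the resulting alignment protocol has finitely many forwarding message schemas. -/
import Mathlib


inductive LifeKind | created | detached | discharged | expired | violated

/-- Cupid expressions. -/
inductive Expr (B R : Type) : Type
  | base : B → Expr B R
  | life : LifeKind → R → R → Expr B R → Expr B R → Expr B R → Expr B R
  | timed : Expr B R → Expr B R → Expr B R → Expr B R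
  | conj : Expr B R → Expr B R → Expr B R
  | disj : Expr B R → Expr B R → Expr B R
  | exc : Expr B R → Expr B R → Expr B R

/-- Syntactic size: the number of constructors. -/
def esize {B R : Type} : Expr B R → ℕ
  | .base _ => 1
  | .life _ _ _ c d u => 1 + esize c + esize d + esize u
  | .timed e s d => 1 + esize e + esize s + esize d
  | .conj l r => 1 + esize l + esize r
  | .disj l r => 1 + esize l + esize r
  | .exc l r => 1 + esize l + esize r

/-- Nesting depth: the maximum number of nested lifecycle-event
constructors. -/
def edepth {B R : Type} : Expr B R → ℕ
  | .base _ => 0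
  | .life _ _ _ c d u => 1 + max (edepth c) (max (edepth d) (edepth u))
  | .timed e s d => max (edepth e) (max (edepth s) (edepth d))
  | .conj l r => max (edepth l) (edepth r)
  | .disj l r => max (edepth l) (edepth r)
  | .exc l r => max (edepth l) (edepth r)

abbrev Instr (B R : Type) := R × Expr B R × R

/-- One-step rewriting of a single alignment instruction (rules R4–R12). -/
inductive Child {B R : Type} : Instr B R → Instr B R → Prop
  | r4e (a b : R) (E S D : Expr B R) : Child (a, .timed E S D, b) (a, E, b)
  | r4s (a b : R) (E S D : Expr B R) : Child (a, .timed E S D, b) (a, S, b)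
  | r4d (a b : R) (E S D : Expr B R) : Child (a, .timed E S D, b) (a, D, b)
  | r5l (a b : R) (L Rr : Expr B R) : Child (a, .conj L Rr, b) (a, L, b)
  | r5r (a b : R) (L Rr : Expr B R) : Child (a, .conj L Rr, b) (a, Rr, b)
  | r6l (a b : R) (L Rr : Expr B R) : Child (a, .disj L Rr, b) (a, L, b)
  | r6r (a b : R) (L Rr : Expr B R) : Child (a, .disj L Rr, b) (a, Rr, b)
  | r7l (a b : R) (L Rr : Expr B R) : Child (a, .exc L Rr, b) (a, L, b)
  | r7r (a b : R) (L Rr : Expr B R) : Child (a, .exc L Rr, b) (b, Rr, a)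
  | r8 (a b x y : R) (C D U : Expr B R) :
      Child (a, .life .created x y C D U, b) (a, C, b)
  | r9 (a b x y : R) (C D U : Expr B R) :
      Child (a, .life .detached x y C D U, b) (a, .conj C D, b)
  | r10 (a b x y : R) (C D U : Expr B R) :
      Child (a, .life .discharged x y C D U, b)
        (a, .disj (.conj C U) (.conj D U), b)
  | r11 (a b x y : R) (C D U : Expr B R) :
      Child (a, .life .expired x y C D U, b) (a, .exc C D, b)
  | r12 (a b x y : R) (C D U : Expr B R) :
      Child (a, .life .violated x y C D U, b) (a, .exc (.conj C D) U, b)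

/-- Rule R13: the initial instructions generated from `c(x,y,Cre,Det,Dis)`. -/
def initInstrs {B R : Type} (x y : R) (Cre Det Dis : Expr B R) : Set (Instr B R) :=
  {(y, .life .created x y Cre Det Dis, x),
   (y, .life .detached x y Cre Det Dis, x),
   (y, .life .violated x y Cre Det Dis, x),
   (x, .life .discharged x y Cre Det Dis, y),
   (x, .life .expired x y Cre Det Dis, y)}


/-- List of all base atoms occurring in an expression. -/
def bl {B R : Type} : Expr B R → List B
  | .base m => [m]
  | .life _ _ _ c d u => bl c ++ bl d ++ bl u
  | .timed e s d => bl e ++ bl s ++ bl d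
  | .conj l r => bl l ++ bl r
  | .disj l r => bl l ++ bl r
  | .exc l r => bl l ++ bl r

lemma bl_length_le {B R : Type} (e : Expr B R) : (bl e).length ≤ esize e := by
  induction e <;> simp [bl, esize] <;> omega

lemma child_inv {B R : Type} {i j : Instr B R} (h : Child i j) :
    (j.1 = i.1 ∨ j.1 = i.2.2) ∧ (j.2.2 = i.1 ∨ j.2.2 = i.2.2) ∧
      ∀ m ∈ bl j.2.1, m ∈ bl i.2.1 := by
  cases h <;> refine ⟨by simp, by simp, ?_⟩ <;> intro m hm <;>
    simp [bl] at hm ⊢ <;> tauto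

/-- The set of atomic alignment instructions generated from a commitment
is finite and bounded by `5 · 2^d · N`, where `N` is the total syntactic
size of `Cre`, `Det`, `Dis` and `d` their maximal nesting depth; in
particular the alignment protocol has finitely many forwarding schemas. -/
theorem atomic_instructions_finite_bounded {B R : Type}
    (x y : R) (Cre Det Dis : Expr B R) :
    (({i : Instr B R |
        (∃ i₀ ∈ initInstrs x y Cre Det Dis, Relation.ReflTransGen Child i₀ i) ∧
        ∃ (a : R) (m : B) (b : R), i = (a, Expr.base m, b)}).Finite) ∧
    ({i : Instr B R |
        (∃ i₀ ∈ initInstrs x y Cre Det Dis, Relation.ReflTransGen Child i₀ i) ∧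
        ∃ (a : R) (m : B) (b : R), i = (a, Expr.base m, b)}).ncard ≤
      5 * 2 ^ (max (edepth Cre) (max (edepth Det) (edepth Dis))) *
        (esize Cre + esize Det + esize Dis) := by
  classical
  set bl0 : List B := bl Cre ++ bl Det ++ bl Dis with hbl0
  set pairF : Finset R := {x, y} with hpairF
  set T : Finset (Instr B R) :=
    (pairF ×ˢ bl0.toFinset ×ˢ pairF).image
      (fun p => (p.1, Expr.base p.2.1, p.2.2)) with hT
  have hinv : ∀ i₀ ∈ initInstrs x y Cre Det Dis, ∀ i,
      Relation.ReflTransGen Child i₀ i →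
      (i.1 = x ∨ i.1 = y) ∧ (i.2.2 = x ∨ i.2.2 = y) ∧
        ∀ m ∈ bl i.2.1, m ∈ bl0 := by
    intro i₀ h₀ i hr
    induction hr with
    | refl =>
        simp only [initInstrs, Set.mem_insert_iff, Set.mem_singleton_iff] at h₀
        rcases h₀ with rfl | rfl | rfl | rfl | rfl <;>
          exact ⟨by simp, by simp, by intro m hm; simpa [bl, hbl0] using hm⟩
    | tail _ hstep ih =>
        obtain ⟨h1, h2, h3⟩ := ih
        obtain ⟨g1, g2, g3⟩ := child_inv hstep
        refine ⟨?_, ?_, fun m hm => h3 m (g3 m hm)⟩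
        · rcases g1 with h | h <;> rw [h] <;> tauto
        · rcases g2 with h | h <;> rw [h] <;> tauto
  have hsub : {i : Instr B R |
        (∃ i₀ ∈ initInstrs x y Cre Det Dis, Relation.ReflTransGen Child i₀ i) ∧
        ∃ (a : R) (m : B) (b : R), i = (a, Expr.base m, b)} ⊆ (T : Set (Instr B R)) := by
    rintro i ⟨⟨i₀, h₀, hr⟩, a, m, b, rfl⟩
    obtain ⟨h1, h2, h3⟩ := hinv i₀ h₀ _ hr
    simp only [hT, Finset.coe_image, Set.mem_image, Finset.mem_coe,
      Finset.mem_product]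
    refine ⟨(a, m, b), ⟨?_, ?_, ?_⟩, rfl⟩
    · simpa [hpairF] using h1
    · simpa using h3 m (by simp [bl])
    · simpa [hpairF] using h2
  have hfin := Set.Finite.subset T.finite_toSet hsub
  refine ⟨hfin, ?_⟩
  have hcard := Set.ncard_le_ncard hsub T.finite_toSet
  rw [Set.ncard_coe_finset] at hcard
  have hTc : T.card ≤ 2 * ((esize Cre + esize Det + esize Dis) * 2) := by
    calc T.card ≤ (pairF ×ˢ bl0.toFinset ×ˢ pairF).card := Finset.card_image_le
    _ = pairF.card * (bl0.toFinset.card * pairF.card) := by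
        simp [Finset.card_product]
    _ ≤ 2 * ((esize Cre + esize Det + esize Dis) * 2) := by
        have hp : pairF.card ≤ 2 := by
          simpa [hpairF] using Finset.card_insert_le x ({y} : Finset R)
        have hb : bl0.toFinset.card ≤ esize Cre + esize Det + esize Dis := by
          refine (List.toFinset_card_le bl0).trans ?_
          have := bl_length_le Cre
          have := bl_length_le Det
          have := bl_length_le Dis
          simp only [hbl0, List.length_append]
          omega
        exact Nat.mul_le_mul hp (Nat.mul_le_mul hb hp)
  have h2d : 1 ≤ 2 ^ (max (edepth Cre) (max (edepth Det) (edepth Dis))) :=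
    Nat.one_le_two_pow
  calc _ ≤ T.card := hcard
    _ ≤ 2 * ((esize Cre + esize Det + esize Dis) * 2) := hTc
    _ ≤ 5 * 2 ^ (max (edepth Cre) (max (edepth Det) (edepth Dis))) *
        (esize Cre + esize Det + esize Dis) := by nlinarith
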